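/- Let a, b, c, d be nonnegative reals with ad ≤ bc, and let f, g be real-rooted polynomials with nonnegative coefficients such that g interlaces f. Then a·x·g + b·f interlaces c·x·g + d·f, provided both are nonzero. -/

import Mathlib

/-!
`g ≼ f` says exactly that for every `x`, the number of roots of `f` in `(x, ∞)` is that of `g`
or one more. Nonnegative coefficients put all roots of `f` and `g` in `(-∞, 0]`, so adding the
root `0` to `g` turns `g ≼ f` into `f ≼ X g`; it remains to show that `F ≼ G` implies
`aG + bF ≼ cG + dF`.

The basic case is `F ≼ αF + βG ≼ G` for `α, β ≥ 0`. Common roots factor out of all three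
polynomials, and without common roots, `αF + βG` has the sign of `F` at the roots of `G` and
the sign of `G` at the roots of `F`; the intermediate value theorem then places one root of
`αF + βG` in each gap, and counting degrees shows there are no others. For `b > 0`,
`cG + dF = (d/b) (bF + aG) + ((bc - ad)/b) G` with nonnegative coefficients, so applying the
basic case twice gives `bF + aG ≼ G` and then `bF + aG ≼ cG + dF`.
-/

open Polynomial Finset

/-- A real polynomial has only real roots: the number of real roots
(with multiplicity) equals its degree. (The zero polynomial counts.) -/
def RealRooted (p : Polynomial ℝ) : Prop :=
  p.roots.card = p.natDegree

/-- The list of real roots of `p`, sorted in increasing order. -/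
noncomputable def rootList (p : Polynomial ℝ) : List ℝ :=
  p.roots.sort (· ≤ ·)

/-- `Interlaces g f` means `g ≼ f`: both are real-rooted with positive leading
coefficients, `deg f ∈ {deg g, deg g + 1}`, and the roots alternate
(`v_n ≤ u_n ≤ v_{n-1} ≤ ⋯ ≤ v_1 ≤ u_1`, resp. `u_n ≤ v_{n-1} ≤ ⋯ ≤ v_1 ≤ u_1`,
indexed in decreasing order). The zero polynomial interlaces and is
interlaced by everything, by convention. -/
def Interlaces (g f : Polynomial ℝ) : Prop :=
  g = 0 ∨ f = 0 ∨
    (RealRooted f ∧ RealRooted g ∧ 0 < f.leadingCoeff ∧ 0 < g.leadingCoeff ∧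
      ((f.natDegree = g.natDegree ∧
          (∀ i < f.natDegree, (rootList g).getD i 0 ≤ (rootList f).getD i 0) ∧
          (∀ i, i + 1 < f.natDegree →
            (rootList f).getD i 0 ≤ (rootList g).getD (i + 1) 0)) ∨
       (f.natDegree = g.natDegree + 1 ∧
          (∀ i < g.natDegree, (rootList f).getD i 0 ≤ (rootList g).getD i 0) ∧
          (∀ i, i + 1 < f.natDegree →
            (rootList g).getD i 0 ≤ (rootList f).getD (i + 1) 0))))

/-- All coefficients of `p` are nonnegative. -/
def NonnegCoeffs (p : Polynomial ℝ) : Prop :=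
  ∀ k, 0 ≤ p.coeff k

open Filter Topology

theorem List.getD_le_iff_lt_countP {α : Type*} [LinearOrder α] {l : List α}
    (hl : l.Pairwise (· ≤ ·)) {k : ℕ} (hk : k < l.length) (d x : α) :
    l.getD k d ≤ x ↔ k < l.countP (· ≤ x) := by
  induction l generalizing k with
  | nil => simp at hk
  | cons a l ih =>
    rw [List.pairwise_cons] at hl
    by_cases ha : a ≤ x
    · rcases k with _ | k
      · simp [ha]
      · simpa [List.countP_cons, ha] using ih hl.2 (by simpa using hk)
    · have hx : ∀ b ∈ a :: l, x < b := by
        simp only [List.mem_cons, forall_eq_or_imp]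
        exact ⟨lt_of_not_ge ha, fun b hb => (lt_of_not_ge ha).trans_le (hl.1 b hb)⟩
      have hcount : (a :: l).countP (· ≤ x) = 0 :=
        List.countP_eq_zero.2 fun b hb => by simpa using hx b hb
      rw [hcount, List.getD_eq_getElem _ _ hk]
      simpa using hx _ (List.getElem_mem hk)

theorem List.forall_getD_le_getD_add_iff {α : Type*} [LinearOrder α] {A B : List α}
    (hA : A.Pairwise (· ≤ ·)) (hB : B.Pairwise (· ≤ ·)) {k : ℕ}
    (hlen : B.length ≤ A.length + k) (d : α) :
    (∀ i, i + k < B.length → A.getD i d ≤ B.getD (i + k) d) ↔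
      ∀ x, B.countP (· ≤ x) ≤ A.countP (· ≤ x) + k := by
  constructor
  · intro h x
    by_contra! hlt
    have hB_le : B.countP (· ≤ x) ≤ B.length := List.countP_le_length
    set i := B.countP (· ≤ x) - 1 - k
    have hBx : B.getD (i + k) d ≤ x := (getD_le_iff_lt_countP hB (by omega) d x).2 (by omega)
    have := (getD_le_iff_lt_countP hA (by omega) d x).1 ((h i (by omega)).trans hBx)
    omega
  · intro h i hi
    have hB' := (getD_le_iff_lt_countP hB hi d _).1 le_rfl
    have hA' : i < A.countP (· ≤ B.getD (i + k) d) := by have := h (B.getD (i + k) d); omega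
    exact (getD_le_iff_lt_countP hA (hA'.trans_le List.countP_le_length) d _).2 hA'

theorem rootList_length {p : ℝ[X]} (hp : RealRooted p) : (rootList p).length = p.natDegree := by
  rw [rootList, Multiset.length_sort, hp]

theorem isRoot_getD_rootList {p : ℝ[X]} {j : ℕ} (hj : j < (rootList p).length) :
    p.IsRoot ((rootList p).getD j 0) := by
  rw [List.getD_eq_getElem _ _ hj]
  exact isRoot_of_mem_roots ((Multiset.mem_sort _).1 (List.getElem_mem hj))

theorem getD_rootList_lt_getD {p : ℝ[X]} (hnd : p.roots.Nodup) {i j : ℕ} (hij : i < j)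
    (hj : j < (rootList p).length) : (rootList p).getD i 0 < (rootList p).getD j 0 := by
  have hnd' : (rootList p).Nodup := by
    rwa [← Multiset.coe_nodup, rootList, Multiset.sort_eq]
  have hlt : (rootList p).Pairwise (· < ·) :=
    ((Multiset.pairwise_sort _ _).and hnd').imp fun h => lt_of_le_of_ne h.1 h.2
  rw [List.getD_eq_getElem _ _ (hij.trans hj), List.getD_eq_getElem _ _ hj]
  exact List.pairwise_iff_getElem.1 hlt i j _ hj hij

noncomputable def countRootsAbove (p : ℝ[X]) (x : ℝ) : ℕ := p.roots.countP (x < ·)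

theorem countRootsAbove_antitone (p : ℝ[X]) : Antitone (countRootsAbove p) := by
  intro x y hxy
  simp only [countRootsAbove, Multiset.countP_eq_card_filter]
  exact Multiset.card_le_card
    (Multiset.monotone_filter_right _ fun r hr => lt_of_le_of_lt hxy hr)

theorem countRootsAbove_le_natDegree (p : ℝ[X]) (x : ℝ) : countRootsAbove p x ≤ p.natDegree :=
  (Multiset.countP_le_card _ _).trans (card_roots' p)

theorem countRootsAbove_add_countP_rootList {p : ℝ[X]} (hp : RealRooted p) (x : ℝ) :
    countRootsAbove p x + (rootList p).countP (· ≤ x) = p.natDegree := by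
  have hcoe : (rootList p : Multiset ℝ) = p.roots := Multiset.sort_eq _ _
  rw [countRootsAbove, ← hcoe, Multiset.coe_countP, ← rootList_length hp,
    List.length_eq_countP_add_countP (fun r => decide (x < r))]
  simp

theorem countRootsAbove_getD_rootList {p : ℝ[X]} (hp : RealRooted p) (hnd : p.roots.Nodup)
    {j : ℕ} (hj : j < p.natDegree) :
    countRootsAbove p ((rootList p).getD j 0) = p.natDegree - 1 - j := by
  have hlen := rootList_length hp
  have hsorted : (rootList p).Pairwise (· ≤ ·) := Multiset.pairwise_sort _ _
  have hsum := countRootsAbove_add_countP_rootList hp ((rootList p).getD j 0)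
  have hlower := (List.getD_le_iff_lt_countP hsorted (hlen ▸ hj) 0 _).1 le_rfl
  have hupper : (rootList p).countP (· ≤ (rootList p).getD j 0) ≤ j + 1 := by
    by_contra! h
    have hj1 : j + 1 < (rootList p).length := h.trans_le List.countP_le_length
    exact (getD_rootList_lt_getD hnd (Nat.lt_succ_self j) hj1).not_ge
      ((List.getD_le_iff_lt_countP hsorted hj1 0 _).2 h)
  omega

theorem countRootsAbove_smul {u : ℝ} (hu : u ≠ 0) (p : ℝ[X]) :
    countRootsAbove (u • p) = countRootsAbove p := by
  ext x
  rw [countRootsAbove, roots_smul_nonzero p hu, countRootsAbove]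

theorem countRootsAbove_X_sub_C_mul {p : ℝ[X]} (hp : p ≠ 0) (w x : ℝ) :
    countRootsAbove ((X - C w) * p) x = countRootsAbove p x + if x < w then 1 else 0 := by
  rw [countRootsAbove, roots_mul (mul_ne_zero (X_sub_C_ne_zero w) hp), roots_X_sub_C,
    Multiset.singleton_add, Multiset.countP_cons, countRootsAbove]

theorem eventually_atBot_countRootsAbove (p : ℝ[X]) :
    ∀ᶠ x in atBot, countRootsAbove p x = Multiset.card p.roots := by
  have : ∀ᶠ x in atBot, ∀ r ∈ p.roots.toFinset, x < r :=
    (eventually_all_finset _).2 fun r _ => eventually_lt_atBot r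
  filter_upwards [this] with x hx
  exact Multiset.countP_eq_card.2 fun r hr => hx r (Multiset.mem_toFinset.2 hr)

theorem eventually_nhdsLT_countRootsAbove (p : ℝ[X]) (x : ℝ) :
    ∀ᶠ y in 𝓝[<] x, countRootsAbove p y = countRootsAbove p x + p.roots.count x := by
  have hbelow : ∀ᶠ y in 𝓝[<] x, ∀ r ∈ p.roots.toFinset, r < x → r < y :=
    (eventually_all_finset _).2 fun r _ => by
      by_cases hr : r < x
      · exact (eventually_nhdsWithin_of_eventually_nhds (eventually_gt_nhds hr)).mono
          fun _ h _ => h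
      · exact .of_forall fun _ h => absurd h hr
  filter_upwards [hbelow, self_mem_nhdsWithin] with y hy hyx
  have hiff : ∀ r ∈ p.roots, y < r ↔ x < r ∨ x = r := fun r hr => by
    have := hy r (Multiset.mem_toFinset.2 hr)
    constructor
    · intro h; contrapose! this; exact ⟨lt_of_le_of_ne this.1 (Ne.symm this.2), h.le⟩
    · rintro (h | rfl) <;> linarith [show y < x from hyx]
  have hdisj : p.roots.filter (fun r => x < r ∧ x = r) = 0 :=
    Multiset.filter_eq_nil.2 fun r _ h => h.1.ne h.2
  rw [countRootsAbove, Multiset.countP_congr rfl fun r hr => propext (hiff r hr), countRootsAbove,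
    Multiset.count_eq_card_filter_eq, Multiset.countP_eq_card_filter,
    Multiset.countP_eq_card_filter, ← Multiset.card_add, Multiset.filter_add_filter, hdisj,
    add_zero]

theorem countRootsAbove_lt_of_eval_mul_neg {p : ℝ[X]} (hp : p ≠ 0) {u v : ℝ} (huv : u < v)
    (h : p.eval u * p.eval v < 0) : countRootsAbove p v < countRootsAbove p u := by
  obtain ⟨z, ⟨huz, hzv⟩, hz⟩ : ∃ z ∈ Set.Ioo u v, p.eval z = 0 := by
    have hcont := p.continuous.continuousOn (s := Set.Icc u v)
    rcases mul_neg_iff.1 h with ⟨hu, hv⟩ | ⟨hu, hv⟩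
    · exact intermediate_value_Ioo' huv.le hcont ⟨hv, hu⟩
    · exact intermediate_value_Ioo huv.le hcont ⟨hu, hv⟩
  simp only [countRootsAbove, Multiset.countP_eq_card_filter]
  refine Multiset.card_lt_card (lt_of_le_of_ne
    (Multiset.monotone_filter_right _ fun r hr => huv.trans hr) fun heq => ?_)
  have hmem : z ∈ p.roots.filter (u < ·) := Multiset.mem_filter.2 ⟨(mem_roots hp).2 hz, huz⟩
  rw [← heq, Multiset.mem_filter] at hmem
  exact absurd hmem.2 (not_lt.2 hzv.le)

theorem RealRooted.eval_pos_iff_even {p : ℝ[X]} (hp : RealRooted p) (hlc : 0 < p.leadingCoeff)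
    {x : ℝ} (hx : ¬p.IsRoot x) : 0 < p.eval x ↔ Even (countRootsAbove p x) := by
  have heval : p.eval x = p.leadingCoeff * (p.roots.map (x - ·)).prod := by
    conv_lhs => rw [← C_leadingCoeff_mul_prod_multiset_X_sub_C hp]
    simp [eval_multiset_prod]
  have habove : ((p.roots.filter (x < ·)).map (x - ·)).prod =
      (-1) ^ countRootsAbove p x * ((p.roots.filter (x < ·)).map (· - x)).prod := by
    rw [countRootsAbove, Multiset.countP_eq_card_filter, ← Multiset.card_map (· - x),
      ← Multiset.prod_map_neg, Multiset.map_map]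
    simp
  have hpos_above : 0 < ((p.roots.filter (x < ·)).map (· - x)).prod :=
    Multiset.prod_pos <| Multiset.forall_mem_map_iff.2 fun r hr =>
      sub_pos.2 (Multiset.mem_filter.1 hr).2
  have hpos_below : 0 < ((p.roots.filter (¬x < ·)).map (x - ·)).prod :=
    Multiset.prod_pos <| Multiset.forall_mem_map_iff.2 fun r hr => by
      obtain ⟨hroot, hle⟩ := Multiset.mem_filter.1 hr
      have hne : r ≠ x := fun h => hx (h ▸ isRoot_of_mem_roots hroot)
      exact sub_pos.2 (lt_of_le_of_ne (not_lt.1 hle) hne)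
  rw [heval, ← Multiset.filter_add_not (x < ·) p.roots, Multiset.map_add, Multiset.prod_add,
    habove]
  rcases Nat.even_or_odd (countRootsAbove p x) with h | h
  · simp only [h, h.neg_one_pow, iff_true]
    positivity
  · simp only [h.neg_one_pow, Nat.not_even_iff_odd.2 h, iff_false]
    exact not_lt.2 (by nlinarith [mul_pos (mul_pos hlc hpos_above) hpos_below])

theorem eventually_atBot_eval_pos_iff_even {p : ℝ[X]} (hlc : 0 < p.leadingCoeff) :
    ∀ᶠ x in atBot, ¬p.IsRoot x ∧ (0 < p.eval x ↔ Even p.natDegree) := by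
  have hequiv := p.isEquivalent_atBot_lead
  have hroot := eventually_atBot_not_isRoot p (leadingCoeff_ne_zero.1 hlc.ne')
  rcases Nat.even_or_odd p.natDegree with h | h
  · have hlead : ∀ᶠ x in atBot, 0 < p.leadingCoeff * x ^ p.natDegree :=
      (eventually_lt_atBot 0).mono fun x hx => mul_pos hlc (h.pow_pos hx.ne)
    filter_upwards [hroot, hequiv.eventually_pos hlead] with x hx hpos
    exact ⟨hx, iff_of_true hpos h⟩
  · have hlead : ∀ᶠ x in atBot, p.leadingCoeff * x ^ p.natDegree < 0 :=
      (eventually_lt_atBot 0).mono fun x hx => mul_neg_of_pos_of_neg hlc (h.pow_neg hx)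
    filter_upwards [hroot, hequiv.eventually_neg hlead] with x hx hneg
    exact ⟨hx, iff_of_false hneg.not_gt (Nat.not_even_iff_odd.2 h)⟩

theorem mul_neg_of_pos_iff_even_succ {u v : ℝ} {k : ℕ} (hu0 : u ≠ 0) (hv0 : v ≠ 0)
    (hu : 0 < u ↔ Even (k + 1)) (hv : 0 < v ↔ Even k) : u * v < 0 := by
  rw [Nat.even_add_one, ← hv] at hu
  rcases lt_or_gt_of_ne hv0 with hv' | hv'
  · exact mul_neg_of_pos_of_neg (hu.2 hv'.not_gt) hv'
  · exact mul_neg_of_neg_of_pos (lt_of_le_of_ne (not_lt.1 fun h => hu.1 h hv') hu0) hv'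

theorem realRooted_and_countRootsAbove_of_sign_changes {p : ℝ[X]} (hp : p ≠ 0) {d : ℕ}
    (hdeg : p.natDegree ≤ d) {x : ℕ → ℝ}
    (hx : ∀ i < d, x i < x (i + 1) ∧ p.eval (x i) * p.eval (x (i + 1)) < 0) :
    RealRooted p ∧ ∀ i ≤ d, countRootsAbove p (x i) = d - i := by
  have hchain : ∀ i j, i ≤ j → j ≤ d →
      countRootsAbove p (x j) + (j - i) ≤ countRootsAbove p (x i) := by
    intro i j hij
    induction j, hij using Nat.le_induction with
    | base => simp
    | succ j hij ih =>
      intro hj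
      have := countRootsAbove_lt_of_eval_mul_neg hp (hx j (by omega)).1 (hx j (by omega)).2
      have := ih (by omega)
      omega
  have hcard : countRootsAbove p (x 0) ≤ Multiset.card p.roots := Multiset.countP_le_card _ _
  have hdeg' := card_roots' p
  refine ⟨?_, fun i hi => ?_⟩
  · have := hchain 0 d (Nat.zero_le _) le_rfl
    unfold RealRooted
    omega
  · have := hchain 0 i (Nat.zero_le _) hi
    have := hchain i d hi le_rfl
    omega

theorem leadingCoeff_smul_eq_mul (u : ℝ) (p : ℝ[X]) :
    (u • p).leadingCoeff = u * p.leadingCoeff := by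
  rw [smul_eq_C_mul, leadingCoeff_mul, leadingCoeff_C]

theorem RealRooted.smul {p : ℝ[X]} (hp : RealRooted p) {u : ℝ} (hu : u ≠ 0) :
    RealRooted (u • p) := by
  rw [RealRooted, roots_smul_nonzero p hu, natDegree_smul p hu]
  exact hp

theorem realRooted_X_sub_C_mul_iff {p : ℝ[X]} (hp : p ≠ 0) (w : ℝ) :
    RealRooted ((X - C w) * p) ↔ RealRooted p := by
  rw [RealRooted, RealRooted, roots_mul (mul_ne_zero (X_sub_C_ne_zero w) hp), roots_X_sub_C,
    natDegree_mul (X_sub_C_ne_zero w) hp, natDegree_X_sub_C, Multiset.card_add,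
    Multiset.card_singleton]
  omega

theorem RealRooted.X_mul {p : ℝ[X]} (hp : RealRooted p) (hp0 : p ≠ 0) : RealRooted (X * p) := by
  simpa using (realRooted_X_sub_C_mul_iff hp0 0).2 hp

theorem natDegree_add_eq_right_and_leadingCoeff_pos {p q : ℝ[X]} (hp : 0 < p.leadingCoeff)
    (hq : 0 < q.leadingCoeff) (hpq : p.natDegree ≤ q.natDegree) :
    (p + q).natDegree = q.natDegree ∧ 0 < (p + q).leadingCoeff := by
  rcases hpq.lt_or_eq with hlt | heq
  · rw [natDegree_add_eq_right_of_natDegree_lt hlt,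
      leadingCoeff_add_of_degree_lt (degree_lt_degree hlt)]
    exact ⟨rfl, hq⟩
  · have hdeg : p.degree = q.degree := by
      rw [degree_eq_natDegree (leadingCoeff_ne_zero.1 hp.ne'),
        degree_eq_natDegree (leadingCoeff_ne_zero.1 hq.ne'), heq]
    have hsum : p.leadingCoeff + q.leadingCoeff ≠ 0 := by positivity
    refine ⟨natDegree_eq_of_degree_eq ?_, ?_⟩
    · rw [degree_add_eq_of_leadingCoeff_add_ne_zero hsum, hdeg, max_self]
    · rw [leadingCoeff_add_of_degree_eq hdeg hsum]
      positivity

theorem nodup_roots_of_count_eq_one {p : ℝ[X]} (h : ∀ t, p.IsRoot t → p.roots.count t = 1) :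
    p.roots.Nodup :=
  Multiset.nodup_iff_count_le_one.2 fun t => by
    by_cases ht : t ∈ p.roots
    · exact (h t (isRoot_of_mem_roots ht)).le
    · rw [Multiset.count_eq_zero.2 ht]; exact zero_le_one

/-- The root-counting form of `F ≼ G`, i.e. of `Interlaces F G` for nonzero `F` and `G`. -/
structure RootsInterlace (F G : ℝ[X]) : Prop where
  realRooted_left : RealRooted F
  realRooted_right : RealRooted G
  leadingCoeff_left_pos : 0 < F.leadingCoeff
  leadingCoeff_right_pos : 0 < G.leadingCoeff
  countRootsAbove_le : ∀ x, countRootsAbove F x ≤ countRootsAbove G x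
  countRootsAbove_le_succ : ∀ x, countRootsAbove G x ≤ countRootsAbove F x + 1

theorem realRooted_and_countRootsAbove_getD_of_sign_at_roots {K P : ℝ[X]} (hK : RealRooted K)
    (hnd : K.roots.Nodup) (hP : 0 < P.leadingCoeff) (hdeg : P.natDegree ≤ K.natDegree)
    (hdeg' : K.natDegree ≤ P.natDegree + 1)
    (hsign : ∀ t, K.IsRoot t → ¬P.IsRoot t ∧ (0 < P.eval t ↔ Even (countRootsAbove K t))) :
    RealRooted P ∧ ∀ j < K.natDegree,
      countRootsAbove P ((rootList K).getD j 0) = K.natDegree - 1 - j := by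
  set n := K.natDegree
  set d := P.natDegree
  set t := fun j => (rootList K).getD j 0
  have hlen := rootList_length hK
  have hsign_t : ∀ j < n, ¬P.IsRoot (t j) ∧ (0 < P.eval (t j) ↔ Even (n - 1 - j)) := by
    intro j hj
    rw [← countRootsAbove_getD_rootList hK hnd hj]
    exact hsign _ (isRoot_getD_rootList (hlen ▸ hj))
  obtain ⟨x₀, ⟨hx₀root, hx₀sign⟩, hx₀⟩ :=
    ((eventually_atBot_eval_pos_iff_even hP).and (eventually_lt_atBot (t 0))).exists
  -- `P` changes sign along `x₀ < t 0 < t 1 < ⋯`; the point `x₀` is dropped if `deg P < deg K`.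
  set y := fun i => (x₀ :: rootList K).getD i 0
  have hy₀ : y 0 = x₀ := rfl
  have hy : ∀ j, y (j + 1) = t j := fun j => rfl
  have hchanges : ∀ i < d, y (i + (n - d)) < y (i + 1 + (n - d)) ∧
      P.eval (y (i + (n - d))) * P.eval (y (i + 1 + (n - d))) < 0 := by
    intro i hi
    rw [show i + 1 + (n - d) = i + (n - d) + 1 by omega]
    rcases hm : i + (n - d) with _ | m
    · rw [hy₀, hy]
      refine ⟨hx₀, mul_neg_of_pos_iff_even_succ hx₀root (hsign_t 0 (by omega)).1 ?_
        (hsign_t 0 (by omega)).2⟩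
      rw [hx₀sign]
      congr! 1
      omega
    · rw [hy, hy]
      refine ⟨getD_rootList_lt_getD hnd (Nat.lt_succ_self m) (by omega),
        mul_neg_of_pos_iff_even_succ (hsign_t m (by omega)).1 (hsign_t (m + 1) (by omega)).1 ?_
          (hsign_t (m + 1) (by omega)).2⟩
      rw [(hsign_t m (by omega)).2, show n - 1 - m = n - 1 - (m + 1) + 1 by omega]
  obtain ⟨hPreal, hcount⟩ := realRooted_and_countRootsAbove_of_sign_changes
    (leadingCoeff_ne_zero.1 hP.ne') le_rfl (x := fun i => y (i + (n - d))) hchanges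
  refine ⟨hPreal, fun j hj => ?_⟩
  have := hcount (j + 1 - (n - d)) (by omega)
  rwa [show j + 1 - (n - d) + (n - d) = j + 1 by omega, hy,
    show d - (j + 1 - (n - d)) = n - 1 - j by omega] at this

theorem rootsInterlace_of_sign_at_roots {K P : ℝ[X]} (hK : RealRooted K)
    (hKlc : 0 < K.leadingCoeff) (hnd : K.roots.Nodup) (hPlc : 0 < P.leadingCoeff)
    (hdeg : P.natDegree ≤ K.natDegree) (hdeg' : K.natDegree ≤ P.natDegree + 1)
    (hsign : ∀ t, K.IsRoot t → ¬P.IsRoot t ∧ (0 < P.eval t ↔ Even (countRootsAbove K t))) :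
    RootsInterlace P K := by
  obtain ⟨hP, hcount⟩ :=
    realRooted_and_countRootsAbove_getD_of_sign_at_roots hK hnd hPlc hdeg hdeg' hsign
  have hsorted : (rootList K).Pairwise (· ≤ ·) := Multiset.pairwise_sort _ _
  have hlen := rootList_length hK
  refine ⟨hP, hK, hPlc, hKlc, fun x => ?_, fun x => ?_⟩
  all_goals
    have hsum := countRootsAbove_add_countP_rootList hK x
    have hc : (rootList K).countP (· ≤ x) ≤ (rootList K).length := List.countP_le_length
    set c := (rootList K).countP (· ≤ x)
  · rcases Nat.eq_zero_or_pos c with hc0 | hc0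
    · have := countRootsAbove_le_natDegree P x
      omega
    · have hle : (rootList K).getD (c - 1) 0 ≤ x :=
        (List.getD_le_iff_lt_countP hsorted (by omega) 0 x).2 (by omega)
      have := countRootsAbove_antitone P hle
      have := hcount (c - 1) (by omega)
      omega
  · rcases hc.lt_or_eq with hcn | hcn
    · have hlt : x < (rootList K).getD c 0 :=
        lt_of_not_ge fun h => lt_irrefl c ((List.getD_le_iff_lt_countP hsorted hcn 0 x).1 h)
      have := countRootsAbove_antitone P hlt.le
      have := hcount c (by omega)
      omega
    · omega

namespace RootsInterlace

variable {F G : ℝ[X]}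

theorem left_ne_zero (h : RootsInterlace F G) : F ≠ 0 :=
  leadingCoeff_ne_zero.1 h.leadingCoeff_left_pos.ne'

theorem right_ne_zero (h : RootsInterlace F G) : G ≠ 0 :=
  leadingCoeff_ne_zero.1 h.leadingCoeff_right_pos.ne'

theorem self {p : ℝ[X]} (hp : RealRooted p) (hlc : 0 < p.leadingCoeff) : RootsInterlace p p :=
  ⟨hp, hp, hlc, hlc, fun _ => le_rfl, fun _ => Nat.le_succ _⟩

theorem smul (h : RootsInterlace F G) {u v : ℝ} (hu : 0 < u) (hv : 0 < v) :
    RootsInterlace (u • F) (v • G) := by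
  refine ⟨h.realRooted_left.smul hu.ne', h.realRooted_right.smul hv.ne', ?_, ?_, ?_, ?_⟩
  · rw [leadingCoeff_smul_eq_mul]; exact mul_pos hu h.leadingCoeff_left_pos
  · rw [leadingCoeff_smul_eq_mul]; exact mul_pos hv h.leadingCoeff_right_pos
  · simpa only [countRootsAbove_smul hu.ne', countRootsAbove_smul hv.ne'] using
      h.countRootsAbove_le
  · simpa only [countRootsAbove_smul hu.ne', countRootsAbove_smul hv.ne'] using
      h.countRootsAbove_le_succ

theorem natDegree_le (h : RootsInterlace F G) :
    F.natDegree ≤ G.natDegree ∧ G.natDegree ≤ F.natDegree + 1 := by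
  obtain ⟨x, hF, hG⟩ :=
    ((eventually_atBot_countRootsAbove F).and (eventually_atBot_countRootsAbove G)).exists
  have := h.countRootsAbove_le x
  have := h.countRootsAbove_le_succ x
  have := h.realRooted_left
  have := h.realRooted_right
  unfold RealRooted at *
  omega

theorem X_sub_C_mul_iff (w : ℝ) :
    RootsInterlace ((X - C w) * F) ((X - C w) * G) ↔ RootsInterlace F G := by
  have hlc : ∀ p : ℝ[X], ((X - C w) * p).leadingCoeff = p.leadingCoeff := fun p => by simp
  have hne : ∀ p : ℝ[X], 0 < ((X - C w) * p).leadingCoeff → p ≠ 0 := fun p hp =>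
    leadingCoeff_ne_zero.1 (hlc p ▸ hp).ne'
  constructor
  · intro h
    have hF := hne F h.leadingCoeff_left_pos
    have hG := hne G h.leadingCoeff_right_pos
    refine ⟨(realRooted_X_sub_C_mul_iff hF w).1 h.realRooted_left,
      (realRooted_X_sub_C_mul_iff hG w).1 h.realRooted_right,
      hlc F ▸ h.leadingCoeff_left_pos, hlc G ▸ h.leadingCoeff_right_pos,
      fun x => ?_, fun x => ?_⟩
    · have := h.countRootsAbove_le x
      rw [countRootsAbove_X_sub_C_mul hF, countRootsAbove_X_sub_C_mul hG] at this
      omega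
    · have := h.countRootsAbove_le_succ x
      rw [countRootsAbove_X_sub_C_mul hF, countRootsAbove_X_sub_C_mul hG] at this
      omega
  · intro h
    refine ⟨(realRooted_X_sub_C_mul_iff h.left_ne_zero w).2 h.realRooted_left,
      (realRooted_X_sub_C_mul_iff h.right_ne_zero w).2 h.realRooted_right,
      (hlc F).symm ▸ h.leadingCoeff_left_pos, (hlc G).symm ▸ h.leadingCoeff_right_pos,
      fun x => ?_, fun x => ?_⟩
    all_goals
      rw [countRootsAbove_X_sub_C_mul h.left_ne_zero, countRootsAbove_X_sub_C_mul h.right_ne_zero]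
    · have := h.countRootsAbove_le x
      omega
    · have := h.countRootsAbove_le_succ x
      omega

theorem interlaces (h : RootsInterlace F G) : Interlaces F G := by
  obtain ⟨hdeg, hdeg'⟩ := h.natDegree_le
  have hF := rootList_length h.realRooted_left
  have hG := rootList_length h.realRooted_right
  have hsF : (rootList F).Pairwise (· ≤ ·) := Multiset.pairwise_sort _ _
  have hsG : (rootList G).Pairwise (· ≤ ·) := Multiset.pairwise_sort _ _
  have hcF := countRootsAbove_add_countP_rootList h.realRooted_left
  have hcG := countRootsAbove_add_countP_rootList h.realRooted_right
  have h₁ := h.countRootsAbove_le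
  have h₂ := h.countRootsAbove_le_succ
  refine Or.inr <| Or.inr ⟨h.realRooted_right, h.realRooted_left, h.leadingCoeff_right_pos,
    h.leadingCoeff_left_pos, ?_⟩
  rcases hdeg.lt_or_eq with hlt | heq
  · refine Or.inr ⟨by omega, fun i hi => ?_, fun i hi => ?_⟩
    · refine (List.forall_getD_le_getD_add_iff hsG hsF (k := 0) (by omega) 0).2
        (fun x => ?_) i (by omega)
      have := hcF x; have := hcG x; have := h₂ x; omega
    · refine (List.forall_getD_le_getD_add_iff hsF hsG (k := 1) (by omega) 0).2
        (fun x => ?_) i (by omega)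
      have := hcF x; have := hcG x; have := h₁ x; omega
  · refine Or.inl ⟨heq.symm, fun i hi => ?_, fun i hi => ?_⟩
    · refine (List.forall_getD_le_getD_add_iff hsF hsG (k := 0) (by omega) 0).2
        (fun x => ?_) i (by omega)
      have := hcF x; have := hcG x; have := h₁ x; omega
    · refine (List.forall_getD_le_getD_add_iff hsG hsF (k := 1) (by omega) 0).2
        (fun x => ?_) i (by omega)
      have := hcF x; have := hcG x; have := h₂ x; omega

theorem countRootsAbove_add_count_le (h : RootsInterlace F G) (t : ℝ) :
    countRootsAbove F t + F.roots.count t ≤ countRootsAbove G t + G.roots.count t ∧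
      countRootsAbove G t + G.roots.count t ≤ countRootsAbove F t + F.roots.count t + 1 := by
  obtain ⟨y, hF, hG⟩ :=
    ((eventually_nhdsLT_countRootsAbove F t).and (eventually_nhdsLT_countRootsAbove G t)).exists
  rw [← hF, ← hG]
  exact ⟨h.countRootsAbove_le y, h.countRootsAbove_le_succ y⟩

theorem count_roots_right_and_countRootsAbove_eq (h : RootsInterlace F G)
    (hcop : ∀ x, F.IsRoot x → ¬G.IsRoot x) {t : ℝ} (ht : G.IsRoot t) :
    G.roots.count t = 1 ∧ countRootsAbove F t = countRootsAbove G t := by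
  have hF : F.roots.count t = 0 :=
    Multiset.count_eq_zero.2 fun hm => hcop t (isRoot_of_mem_roots hm) ht
  have hG : 0 < G.roots.count t := Multiset.count_pos.2 ((mem_roots h.right_ne_zero).2 ht)
  have := h.countRootsAbove_add_count_le t
  have := h.countRootsAbove_le t
  omega

theorem count_roots_left_and_countRootsAbove_eq (h : RootsInterlace F G)
    (hcop : ∀ x, F.IsRoot x → ¬G.IsRoot x) {s : ℝ} (hs : F.IsRoot s) :
    F.roots.count s = 1 ∧ countRootsAbove G s = countRootsAbove F s + 1 := by
  have hG : G.roots.count s = 0 :=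
    Multiset.count_eq_zero.2 fun hm => hcop s hs (isRoot_of_mem_roots hm)
  have hF : 0 < F.roots.count s := Multiset.count_pos.2 ((mem_roots h.left_ne_zero).2 hs)
  have := h.countRootsAbove_add_count_le s
  have := h.countRootsAbove_le_succ s
  omega

theorem natDegree_smul_add_smul (h : RootsInterlace F G) {α β : ℝ} (hα : 0 < α) (hβ : 0 < β) :
    (α • F + β • G).natDegree = G.natDegree ∧ 0 < (α • F + β • G).leadingCoeff := by
  have := natDegree_add_eq_right_and_leadingCoeff_pos
    (by rw [leadingCoeff_smul_eq_mul]; exact mul_pos hα h.leadingCoeff_left_pos)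
    (by rw [leadingCoeff_smul_eq_mul]; exact mul_pos hβ h.leadingCoeff_right_pos)
    (by rw [natDegree_smul _ hα.ne', natDegree_smul _ hβ.ne']; exact h.natDegree_le.1)
  rwa [natDegree_smul _ hβ.ne'] at this

theorem smul_add_smul_left_of_forall_not_isRoot (h : RootsInterlace F G)
    (hcop : ∀ x, F.IsRoot x → ¬G.IsRoot x) {α β : ℝ} (hα : 0 < α) (hβ : 0 < β) :
    RootsInterlace (α • F + β • G) G := by
  obtain ⟨hdeg, hlc⟩ := h.natDegree_smul_add_smul hα hβ
  refine rootsInterlace_of_sign_at_roots h.realRooted_right h.leadingCoeff_right_pos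
    (nodup_roots_of_count_eq_one fun t ht =>
      (h.count_roots_right_and_countRootsAbove_eq hcop ht).1)
    hlc hdeg.le (by omega) fun t ht => ?_
  have hFt : ¬F.IsRoot t := fun hFt => hcop t hFt ht
  have heval : (α • F + β • G).eval t = α * F.eval t := by simp [ht.eq_zero]
  rw [IsRoot, heval, mul_pos_iff_of_pos_left hα,
    h.realRooted_left.eval_pos_iff_even h.leadingCoeff_left_pos hFt,
    (h.count_roots_right_and_countRootsAbove_eq hcop ht).2]
  exact ⟨mul_ne_zero hα.ne' hFt, Iff.rfl⟩

theorem smul_add_smul_of_forall_not_isRoot (h : RootsInterlace F G)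
    (hcop : ∀ x, F.IsRoot x → ¬G.IsRoot x) {α β : ℝ} (hα : 0 < α) (hβ : 0 < β) :
    RootsInterlace F (α • F + β • G) ∧ RootsInterlace (α • F + β • G) G := by
  have hHG := h.smul_add_smul_left_of_forall_not_isRoot hcop hα hβ
  have hHdeg := (h.natDegree_smul_add_smul hα hβ).1
  have hdeg := h.natDegree_le
  set H := α • F + β • G
  have hcopHG : ∀ x, H.IsRoot x → ¬G.IsRoot x := fun x hH hG => by
    refine hcop x ?_ hG
    simpa [H, IsRoot, hG.eq_zero, hα.ne'] using hH
  refine ⟨rootsInterlace_of_sign_at_roots hHG.realRooted_left hHG.leadingCoeff_left_pos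
    (nodup_roots_of_count_eq_one fun s hs =>
      (hHG.count_roots_left_and_countRootsAbove_eq hcopHG hs).1)
    h.leadingCoeff_left_pos (by omega) (by omega) fun s hs => ?_, hHG⟩
  have hGs : ¬G.IsRoot s := hcopHG s hs
  have hFs : ¬F.IsRoot s := fun hFs =>
    hcop s hFs (by simpa [H, IsRoot, hFs.eq_zero, hβ.ne'] using hs)
  have hrel : α * F.eval s = -(β * G.eval s) := by
    simpa [H, eq_neg_iff_add_eq_zero] using hs.eq_zero
  have hG := h.realRooted_right.eval_pos_iff_even h.leadingCoeff_right_pos hGs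
  rw [(hHG.count_roots_left_and_countRootsAbove_eq hcopHG hs).2, Nat.even_add_one] at hG
  refine ⟨hFs, ?_⟩
  rw [← mul_pos_iff_of_pos_left hα, hrel, neg_pos]
  constructor
  · intro hneg
    by_contra hE
    exact (mul_pos hβ (hG.2 hE)).not_gt hneg
  · intro hE
    exact mul_neg_of_pos_of_neg hβ (lt_of_le_of_ne (not_lt.1 fun hpos => hG.1 hpos hE) hGs)

theorem smul_add_smul_of_pos {F G : ℝ[X]} (h : RootsInterlace F G) {α β : ℝ} (hα : 0 < α)
    (hβ : 0 < β) :
    RootsInterlace F (α • F + β • G) ∧ RootsInterlace (α • F + β • G) G := by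
  by_cases hcommon : ∃ w, F.IsRoot w ∧ G.IsRoot w
  swap
  · exact h.smul_add_smul_of_forall_not_isRoot (fun x hF hG => hcommon ⟨x, hF, hG⟩) hα hβ
  obtain ⟨w, hFw, hGw⟩ := hcommon
  obtain ⟨F₁, rfl⟩ := dvd_iff_isRoot.2 hFw
  obtain ⟨G₁, rfl⟩ := dvd_iff_isRoot.2 hGw
  have h₁ := (X_sub_C_mul_iff w).1 h
  have hdeg : F₁.natDegree < ((X - C w) * F₁).natDegree := by
    rw [natDegree_mul (X_sub_C_ne_zero w) h₁.left_ne_zero, natDegree_X_sub_C]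
    omega
  have ih := smul_add_smul_of_pos h₁ hα hβ
  have hfactor :
      α • ((X - C w) * F₁) + β • ((X - C w) * G₁) = (X - C w) * (α • F₁ + β • G₁) := by
    rw [mul_add, mul_smul_comm, mul_smul_comm]
  rw [hfactor]
  exact ⟨(X_sub_C_mul_iff w).2 ih.1, (X_sub_C_mul_iff w).2 ih.2⟩
termination_by F.natDegree

theorem smul_add_smul (h : RootsInterlace F G) {α β : ℝ}
    (hα : 0 ≤ α) (hβ : 0 ≤ β) (hαβ : 0 < α + β) :
    RootsInterlace F (α • F + β • G) ∧ RootsInterlace (α • F + β • G) G := by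
  have hFF := RootsInterlace.self h.realRooted_left h.leadingCoeff_left_pos
  have hGG := RootsInterlace.self h.realRooted_right h.leadingCoeff_right_pos
  rcases hα.eq_or_lt with rfl | hα
  · rw [zero_smul, zero_add]
    have hβ : 0 < β := by linarith
    exact ⟨by simpa using h.smul one_pos hβ, by simpa using hGG.smul hβ one_pos⟩
  rcases hβ.eq_or_lt with rfl | hβ
  · rw [zero_smul, add_zero]
    exact ⟨by simpa using hFF.smul one_pos hα, by simpa using h.smul hα one_pos⟩
  exact h.smul_add_smul_of_pos hα hβ

end RootsInterlace

theorem Interlaces.rootsInterlace {F G : ℝ[X]} (h : Interlaces F G) (hF0 : F ≠ 0)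
    (hG0 : G ≠ 0) : RootsInterlace F G := by
  obtain rfl | rfl | ⟨hGr, hFr, hGlc, hFlc, hroots⟩ := h
  · exact absurd rfl hF0
  · exact absurd rfl hG0
  have hF := rootList_length hFr
  have hG := rootList_length hGr
  have hsF : (rootList F).Pairwise (· ≤ ·) := Multiset.pairwise_sort _ _
  have hsG : (rootList G).Pairwise (· ≤ ·) := Multiset.pairwise_sort _ _
  refine ⟨hFr, hGr, hFlc, hGlc, fun x => ?_, fun x => ?_⟩
  all_goals
    have := countRootsAbove_add_countP_rootList hFr x
    have := countRootsAbove_add_countP_rootList hGr x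
  · rcases hroots with ⟨hdeg, h₁, -⟩ | ⟨hdeg, -, h₂⟩
    · have := (List.forall_getD_le_getD_add_iff hsF hsG (k := 0) (by omega) 0).1
        (fun i hi => h₁ i (by omega)) x
      omega
    · have := (List.forall_getD_le_getD_add_iff hsF hsG (k := 1) (by omega) 0).1
        (fun i hi => h₂ i (by omega)) x
      omega
  · rcases hroots with ⟨hdeg, -, h₂⟩ | ⟨hdeg, h₁, -⟩
    · have := (List.forall_getD_le_getD_add_iff hsG hsF (k := 1) (by omega) 0).1
        (fun i hi => h₂ i (by omega)) x
      omega
    · have := (List.forall_getD_le_getD_add_iff hsG hsF (k := 0) (by omega) 0).1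
        (fun i hi => h₁ i (by omega)) x
      omega

theorem interlaces_smul_smul_self {p : ℝ[X]} (hp : RealRooted p) (hlc : 0 ≤ p.leadingCoeff)
    {u v : ℝ} (hu : 0 ≤ u) (hv : 0 ≤ v) : Interlaces (u • p) (v • p) := by
  rcases hu.eq_or_lt with rfl | hu
  · exact Or.inl (zero_smul _ _)
  rcases hv.eq_or_lt with rfl | hv
  · exact Or.inr (Or.inl (zero_smul _ _))
  rcases hlc.eq_or_lt with hlc | hlc
  · exact Or.inl (by rw [leadingCoeff_eq_zero.1 hlc.symm, smul_zero])
  · exact ((RootsInterlace.self hp hlc).smul hu hv).interlaces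

theorem RootsInterlace.interlaces_smul_add_smul {F G : ℝ[X]} (h : RootsInterlace F G)
    {a b c d : ℝ} (ha : 0 ≤ a) (hb : 0 ≤ b) (hc : 0 ≤ c) (hd : 0 ≤ d)
    (hdet : a * d ≤ b * c) :
    Interlaces (a • G + b • F) (c • G + d • F) := by
  rcases hb.eq_or_lt with rfl | hb
  · obtain rfl | rfl : a = 0 ∨ d = 0 :=
      mul_eq_zero.1 (le_antisymm (by simpa using hdet) (mul_nonneg ha hd))
    · exact Or.inl (by simp)
    · simpa using interlaces_smul_smul_self h.realRooted_right h.leadingCoeff_right_pos.le ha hc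
  have hPG := (h.smul_add_smul hb.le ha (by linarith)).2
  have hd' : 0 ≤ d / b := div_nonneg hd hb.le
  have hdet' : 0 ≤ (b * c - a * d) / b := div_nonneg (sub_nonneg.2 hdet) hb.le
  have hQ : c • G + d • F = (d / b) • (b • F + a • G) + ((b * c - a * d) / b) • G := by
    match_scalars
    · field_simp
      ring
    · field_simp
  rw [add_comm (a • G), hQ]
  rcases (add_nonneg hd' hdet').eq_or_lt with h0 | hpos
  · rw [show d / b = 0 by linarith, show (b * c - a * d) / b = 0 by linarith, zero_smul,
      zero_smul, add_zero]
    exact Or.inr (Or.inl rfl)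
  · exact (hPG.smul_add_smul hd' hdet' hpos).1.interlaces

theorem NonnegCoeffs.eval_pos {p : ℝ[X]} (hp : NonnegCoeffs p) (hp0 : p ≠ 0) {x : ℝ}
    (hx : 0 < x) : 0 < p.eval x := by
  rw [eval_eq_sum_range]
  refine lt_of_lt_of_le ?_ (single_le_sum (fun i _ => mul_nonneg (hp i) (pow_nonneg hx.le i))
    (self_mem_range_succ _))
  exact mul_pos (lt_of_le_of_ne (hp _) (leadingCoeff_ne_zero.2 hp0).symm) (pow_pos hx _)

theorem NonnegCoeffs.countRootsAbove_eq_zero {p : ℝ[X]} (hp : NonnegCoeffs p) {x : ℝ}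
    (hx : 0 ≤ x) : countRootsAbove p x = 0 :=
  Multiset.countP_eq_zero.2 fun _ hr hxr =>
    (hp.eval_pos (ne_zero_of_mem_roots hr) (hx.trans_lt hxr)).ne' (isRoot_of_mem_roots hr)

theorem Interlaces.rootsInterlace_X_mul {f g : ℝ[X]} (hint : Interlaces g f) (hf : f ≠ 0)
    (hg : g ≠ 0) (hfnn : NonnegCoeffs f) (hgnn : NonnegCoeffs g) : RootsInterlace f (X * g) := by
  have h := hint.rootsInterlace hg hf
  have hX : X * g = (X - C 0) * g := by simp
  refine ⟨h.realRooted_right, h.realRooted_left.X_mul hg,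
    h.leadingCoeff_right_pos, by simpa using h.leadingCoeff_left_pos, fun x => ?_, fun x => ?_⟩
  all_goals
    rw [hX, countRootsAbove_X_sub_C_mul hg]
    by_cases hx : x < 0
  · have := h.countRootsAbove_le_succ x
    simp only [hx, if_true]
    omega
  · rw [hfnn.countRootsAbove_eq_zero (not_lt.1 hx)]
    exact Nat.zero_le _
  · have := h.countRootsAbove_le x
    simp only [hx, if_true]
    omega
  · rw [hgnn.countRootsAbove_eq_zero (not_lt.1 hx), if_neg hx]
    exact Nat.zero_le _

theorem stmt6_general (a b c d : ℝ) (ha : 0 ≤ a) (hb : 0 ≤ b) (hc : 0 ≤ c) (hd : 0 ≤ d)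
    (hdet : a * d ≤ b * c) (f g : Polynomial ℝ)
    (hfrr : RealRooted f) (hgrr : RealRooted g)
    (hfnn : NonnegCoeffs f) (hgnn : NonnegCoeffs g)
    (hint : Interlaces g f) :
    Interlaces (a • (X * g) + b • f) (c • (X * g) + d • f) := by
  rcases eq_or_ne g 0 with rfl | hg
  · simpa using interlaces_smul_smul_self hfrr (hfnn _) hb hd
  rcases eq_or_ne f 0 with rfl | hf
  · have hlc : 0 ≤ (X * g).leadingCoeff := by simpa using (hgnn _ : 0 ≤ g.leadingCoeff)
    simpa using interlaces_smul_smul_self (hgrr.X_mul hg) hlc ha hc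
  exact (hint.rootsInterlace_X_mul hf hg hfnn hgnn).interlaces_smul_add_smul ha hb hc hd hdet

/-- if `a, b, c, d ≥ 0` with `ad ≤ bc` and `g ≼ f` for real-rooted
polynomials `f, g` with nonnegative coefficients, then
`a·x·g + b·f ≼ c·x·g + d·f` provided both are nonzero. -/
theorem stmt6 (a b c d : ℝ) (ha : 0 ≤ a) (hb : 0 ≤ b) (hc : 0 ≤ c) (hd : 0 ≤ d)
    (hdet : a * d ≤ b * c) (f g : Polynomial ℝ)
    (hfrr : RealRooted f) (hgrr : RealRooted g)
    (hfnn : NonnegCoeffs f) (hgnn : NonnegCoeffs g)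
    (hint : Interlaces g f)
    (h1 : a • (X * g) + b • f ≠ 0) (h2 : c • (X * g) + d • f ≠ 0) :
    Interlaces (a • (X * g) + b • f) (c • (X * g) + d • f) :=
  stmt6_general a b c d ha hb hc hd hdet f g hfrr hgrr hfnn hgnn hint
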